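/- Truncation error of the O-SVD: let A = (U *₃ S *₃ V) ×₃ U⁽³⁾ be the O-SVD of A ∈ ℝ^{I₁×I₂×I₃} (U⁽³⁾ orthogonal, each frontal slice U(:,:,i), V(:,:,i) orthogonal, S(:,:,i) nonnegative diagonal with entries s_{jji}), and let A_k be the truncation keeping the first k₁ frontal slices and, within slice i ≤ k₁, the first k_{2i} singular triplets. Then ‖A − A_k‖_F² = ∑_{i=1}^{k₁} ∑_{j=k_{2i}+1}^{r₂} s_{jji}² + ∑_{i=k₁+1}^{I₃} ∑_{j=1}^{r₂} s_{jji}², where r₂ = min{I₁,I₂}. -/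

import Mathlib

/-!
The residual `A - A_k` is again of O-SVD form, with the same orthogonal factors and diagonal
core slices carrying exactly the discarded singular values. Facewise
multiplication by orthogonal slices and the mode-3 product with an orthogonal matrix both
preserve the Frobenius norm, so `‖A - A_k‖_F²` is the sum of the squares of the discarded
singular values.
-/

open Matrix

theorem Fin.sum_castLE_eq_sum_ite {M : Type*} [AddCommMonoid M] {k n : ℕ} (h : k ≤ n)
    (g : Fin n → M) :
    ∑ c : Fin k, g (Fin.castLE h c) = ∑ c : Fin n, if (c : ℕ) < k then g c else 0 := by
  rw [← Finset.sum_filter]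
  refine Finset.sum_nbij (Fin.castLE h) (fun c _ => by simp) (Fin.castLE_injective h).injOn
    (fun c hc => ⟨⟨c, by simpa using hc⟩, Finset.mem_univ _, rfl⟩) (fun _ _ => rfl)

theorem Finset.sum_range_ite_lt_zero_eq_sum_Ico {M : Type*} [AddCommMonoid M] (k n : ℕ)
    (f : ℕ → M) :
    ∑ j ∈ range n, (if j < k then 0 else f j) = ∑ j ∈ Ico k n, f j := by
  rw [sum_ite, sum_const_zero, zero_add]
  congr 1
  ext j
  simp only [mem_filter, mem_range, mem_Ico]
  omega

theorem Fin.sum_sum_ite_val_eq_sum_range_min {M : Type*} [AddCommMonoid M] (m n : ℕ)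
    (f : ℕ → M) :
    ∑ i : Fin m, ∑ j : Fin n, (if (i : ℕ) = j then f i else 0) =
      ∑ j ∈ Finset.range (min m n), f j := by
  have hrow (i : Fin m) :
      ∑ j : Fin n, (if (i : ℕ) = j then f i else 0) = if (i : ℕ) < n then f i else 0 := by
    rw [Fin.sum_univ_eq_sum_range (fun j => if (i : ℕ) = j then f i else 0), Finset.sum_ite_eq]
    simp only [Finset.mem_range]
  simp_rw [hrow]
  rw [Fin.sum_univ_eq_sum_range (fun i => if i < n then f i else 0), ← Finset.sum_filter]
  congr 1
  ext j
  simp only [Finset.mem_filter, Finset.mem_range]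
  omega

section Orthogonal

variable {R : Type*} [CommSemiring R] {ι κ m n : Type*} [Fintype ι] [Fintype κ] [Fintype m]
  [Fintype n]

theorem Matrix.sum_sq_mulVec_of_transpose_mul_self [DecidableEq ι] {P : Matrix κ ι R}
    (hP : Pᵀ * P = 1) (x : ι → R) : ∑ l, (P *ᵥ x) l ^ 2 = ∑ c, x c ^ 2 := by
  have key : (P *ᵥ x) ⬝ᵥ (P *ᵥ x) = x ⬝ᵥ x := by
    rw [dotProduct_mulVec, ← mulVec_transpose, mulVec_mulVec, hP, one_mulVec, dotProduct_comm]
  simpa only [dotProduct, sq] using key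

theorem Matrix.sum_sq_mul_of_transpose_mul_self [DecidableEq m] {P : Matrix κ m R}
    (hP : Pᵀ * P = 1) (X : Matrix m n R) :
    ∑ i, ∑ j, (P * X) i j ^ 2 = ∑ i, ∑ j, X i j ^ 2 := by
  rw [Finset.sum_comm, Finset.sum_comm (f := fun i j => X i j ^ 2)]
  exact Finset.sum_congr rfl fun j _ => sum_sq_mulVec_of_transpose_mul_self hP (Xᵀ j)

theorem Matrix.sum_sq_mul_of_mul_transpose_self [DecidableEq n] {Q : Matrix n κ R}
    (hQ : Q * Qᵀ = 1) (X : Matrix m n R) :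
    ∑ i, ∑ j, (X * Q) i j ^ 2 = ∑ i, ∑ j, X i j ^ 2 := by
  refine Finset.sum_congr rfl fun i _ => ?_
  have hQt : Qᵀᵀ * Qᵀ = 1 := by rwa [transpose_transpose]
  simpa only [mulVec_transpose, vecMul, dotProduct, mul_apply] using
    sum_sq_mulVec_of_transpose_mul_self hQt (X i)

theorem Matrix.sum_sq_sum_mul_slices_of_orthogonal {o : Type*} [Fintype o] [DecidableEq ι]
    [DecidableEq m] [DecidableEq n] {W : Matrix o ι R} (hW : Wᵀ * W = 1)
    {P : ι → Matrix m m R} (hP : ∀ c, (P c)ᵀ * P c = 1)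
    {Q : ι → Matrix n n R} (hQ : ∀ c, Q c * (Q c)ᵀ = 1) (M : ι → Matrix m n R) :
    ∑ i, ∑ j, ∑ l, (∑ c, (P c * M c * Q c) i j * W l c) ^ 2 =
      ∑ c, ∑ i, ∑ j, M c i j ^ 2 := by
  have hmode (i : m) (j : n) :
      ∑ l, (∑ c, (P c * M c * Q c) i j * W l c) ^ 2 = ∑ c, (P c * M c * Q c) i j ^ 2 := by
    simpa only [mulVec, dotProduct, mul_comm] using
      sum_sq_mulVec_of_transpose_mul_self hW (fun c => (P c * M c * Q c) i j)
  simp_rw [hmode]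
  conv_lhs => enter [2, i]; rw [Finset.sum_comm]
  rw [Finset.sum_comm]
  refine Finset.sum_congr rfl fun c _ => ?_
  rw [sum_sq_mul_of_mul_transpose_self (hQ c), sum_sq_mul_of_transpose_mul_self (hP c)]

end Orthogonal

section Diagonal

variable {R : Type*} [Ring R] {m n : ℕ} {e : ℕ → R} {S : Matrix (Fin m) (Fin n) R}

theorem Matrix.sum_sq_of_diagonal (hS : ∀ i j, S i j = if (i : ℕ) = (j : ℕ) then e i else 0) :
    ∑ i, ∑ j, S i j ^ 2 = ∑ j ∈ Finset.range (min m n), e j ^ 2 := by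
  simp only [hS, ite_pow, zero_pow two_ne_zero]
  exact Fin.sum_sum_ite_val_eq_sum_range_min m n fun i => e i ^ 2

theorem Matrix.sum_sq_sub_truncation_of_diagonal
    (hS : ∀ i j, S i j = if (i : ℕ) = (j : ℕ) then e i else 0) {k : ℕ}
    {T : Matrix (Fin m) (Fin n) R} (hT : ∀ i j, T i j = if (i : ℕ) < k then S i j else 0) :
    ∑ i, ∑ j, (S - T) i j ^ 2 = ∑ j ∈ Finset.Ico k (min m n), e j ^ 2 := by
  have hdiag (i j) :
      (S - T) i j = if (i : ℕ) = (j : ℕ) then (if (i : ℕ) < k then 0 else e i) else 0 := by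
    rw [sub_apply, hT, hS]
    split_ifs <;> simp only [sub_self, sub_zero]
  rw [sum_sq_of_diagonal (e := fun j => if j < k then 0 else e j) hdiag,
    ← Finset.sum_range_ite_lt_zero_eq_sum_Ico]
  simp only [ite_pow, zero_pow two_ne_zero]

end Diagonal

/-- Slices and singular values are `0`-indexed: the paper's `∑_{j=k_{2i}+1}^{r₂}` is the sum
over `Finset.Ico (k₂ c) (min I₁ I₂)`. -/
theorem tosvd_truncation_error_general {I₁ I₂ I₃ k₁ : ℕ} (hk₁ : k₁ ≤ I₃)
    (U3 : Matrix (Fin I₃) (Fin I₃) ℝ) (hU3 : U3ᵀ * U3 = 1)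
    (U : Fin I₃ → Matrix (Fin I₁) (Fin I₁) ℝ)
    (hU : ∀ c, (U c)ᵀ * U c = 1)
    (V : Fin I₃ → Matrix (Fin I₂) (Fin I₂) ℝ)
    (hV' : ∀ c, V c * (V c)ᵀ = 1)
    (d : Fin I₃ → ℕ → ℝ)
    (S : Fin I₃ → Matrix (Fin I₁) (Fin I₂) ℝ)
    (hS : ∀ c i j, S c i j = if (i : ℕ) = (j : ℕ) then d c i else 0)
    (k₂ : Fin I₃ → ℕ)
    (Strunc : Fin I₃ → Matrix (Fin I₁) (Fin I₂) ℝ)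
    (hStrunc : ∀ c i j, Strunc c i j = if (i : ℕ) < k₂ c then S c i j else 0)
    (A Ak : Fin I₁ → Fin I₂ → Fin I₃ → ℝ)
    (hA : ∀ i j l, A i j l = ∑ c, (U c * S c * V c) i j * U3 l c)
    (hAk : ∀ i j l, Ak i j l =
      ∑ c : Fin k₁,
        (U (Fin.castLE hk₁ c) * Strunc (Fin.castLE hk₁ c) * V (Fin.castLE hk₁ c)) i j *
          U3 l (Fin.castLE hk₁ c)) :
    ∑ i, ∑ j, ∑ l, (A i j l - Ak i j l) ^ 2 =
      (∑ c : Fin k₁, ∑ j ∈ Finset.Ico (k₂ (Fin.castLE hk₁ c)) (min I₁ I₂),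
          (d (Fin.castLE hk₁ c) j) ^ 2) +
        ∑ c : Fin I₃, if k₁ ≤ (c : ℕ) then
          ∑ j ∈ Finset.range (min I₁ I₂), (d c j) ^ 2 else 0 := by
  set R : Fin I₃ → Matrix (Fin I₁) (Fin I₂) ℝ :=
    fun c => S c - if (c : ℕ) < k₁ then Strunc c else 0 with hR
  have hslice (c) :
      U c * R c * V c = U c * S c * V c - if (c : ℕ) < k₁ then U c * Strunc c * V c else 0 := by
    simp only [hR, Matrix.mul_sub, Matrix.sub_mul]
    split_ifs <;> simp only [Matrix.mul_zero, Matrix.zero_mul]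
  have hdiff (i j l) : A i j l - Ak i j l = ∑ c, (U c * R c * V c) i j * U3 l c := by
    rw [hA, hAk, Fin.sum_castLE_eq_sum_ite hk₁ fun c => (U c * Strunc c * V c) i j * U3 l c,
      ← Finset.sum_sub_distrib]
    refine Finset.sum_congr rfl fun c _ => ?_
    rw [hslice, Matrix.sub_apply, sub_mul]
    split_ifs <;> simp only [Matrix.zero_apply, zero_mul]
  have hRnorm (c) : ∑ i, ∑ j, R c i j ^ 2 = if (c : ℕ) < k₁ then
      ∑ j ∈ Finset.Ico (k₂ c) (min I₁ I₂), d c j ^ 2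
      else ∑ j ∈ Finset.range (min I₁ I₂), d c j ^ 2 := by
    split_ifs with hc
    · simpa only [hR, hc, if_true] using sum_sq_sub_truncation_of_diagonal (hS c) (hStrunc c)
    · simpa only [hR, hc, if_false, sub_zero] using sum_sq_of_diagonal (hS c)
  simp_rw [hdiff, sum_sq_sum_mul_slices_of_orthogonal hU3 hU hV', hRnorm,
    Fin.sum_castLE_eq_sum_ite hk₁ fun c =>
      ∑ j ∈ Finset.Ico (k₂ c) (min I₁ I₂), d c j ^ 2,
    ← Finset.sum_add_distrib]
  refine Finset.sum_congr rfl fun c _ => ?_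
  by_cases hc : (c : ℕ) < k₁ <;> simp [hc]

/-- Truncation error of the O-SVD (Theorem 3.5).  The tensor
`A = (U *₃ S *₃ V) ×₃ U⁽³⁾` is given entrywise by
`A i j l = ∑ c, (U c * S c * V c) i j * U⁽³⁾ l c`, where `U⁽³⁾` is orthogonal,
each frontal slice `U c`, `V c` is orthogonal and `S c` is nonnegative diagonal
with diagonal entries `d c ·`.  The truncation `A_k` keeps the first `k₁`
frontal slices and, within slice `c < k₁`, the first `k₂ c` singular triplets
(realized by zeroing the diagonal of `S c` from position `k₂ c` on).  Then
`‖A − A_k‖_F² = ∑_{i<k₁} ∑_{j=k₂ᵢ}^{r₂-1} s_{jji}² + ∑_{i≥k₁} ∑_{j<r₂} s_{jji}²`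
with `r₂ = min I₁ I₂`. -/
theorem tosvd_truncation_error {I₁ I₂ I₃ k₁ : ℕ} (hk₁ : k₁ ≤ I₃)
    (U3 : Matrix (Fin I₃) (Fin I₃) ℝ) (hU3 : U3ᵀ * U3 = 1) (hU3' : U3 * U3ᵀ = 1)
    (U : Fin I₃ → Matrix (Fin I₁) (Fin I₁) ℝ)
    (hU : ∀ c, (U c)ᵀ * U c = 1) (hU' : ∀ c, U c * (U c)ᵀ = 1)
    (V : Fin I₃ → Matrix (Fin I₂) (Fin I₂) ℝ)
    (hV : ∀ c, (V c)ᵀ * V c = 1) (hV' : ∀ c, V c * (V c)ᵀ = 1)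
    (d : Fin I₃ → ℕ → ℝ) (hd : ∀ c j, 0 ≤ d c j)
    (S : Fin I₃ → Matrix (Fin I₁) (Fin I₂) ℝ)
    (hS : ∀ c i j, S c i j = if (i : ℕ) = (j : ℕ) then d c i else 0)
    (k₂ : Fin I₃ → ℕ)
    (Strunc : Fin I₃ → Matrix (Fin I₁) (Fin I₂) ℝ)
    (hStrunc : ∀ c i j, Strunc c i j = if (i : ℕ) < k₂ c then S c i j else 0)
    (A Ak : Fin I₁ → Fin I₂ → Fin I₃ → ℝ)
    (hA : ∀ i j l, A i j l = ∑ c, (U c * S c * V c) i j * U3 l c)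
    (hAk : ∀ i j l, Ak i j l =
      ∑ c : Fin k₁,
        (U (Fin.castLE hk₁ c) * Strunc (Fin.castLE hk₁ c) * V (Fin.castLE hk₁ c)) i j *
          U3 l (Fin.castLE hk₁ c)) :
    ∑ i, ∑ j, ∑ l, (A i j l - Ak i j l) ^ 2 =
      (∑ c : Fin k₁, ∑ j ∈ Finset.Ico (k₂ (Fin.castLE hk₁ c)) (min I₁ I₂),
          (d (Fin.castLE hk₁ c) j) ^ 2) +
        ∑ c : Fin I₃, if k₁ ≤ (c : ℕ) then
          ∑ j ∈ Finset.range (min I₁ I₂), (d c j) ^ 2 else 0 :=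
  tosvd_truncation_error_general hk₁ U3 hU3 U hU V hV' d S hS k₂ Strunc hStrunc A Ak hA hAk
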